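/- arXiv:math-ph/0505042 — 3 statements merged into one kernel-verified Lean document; each statement's English description precedes it below -/
import Mathlib

section
/- Let x : [0, τ₂] → ℝ be differentiable with 0 < x'(τ) ≤ M for all τ, x(0) = −r₀, x(τ₂) = −r₂ where 0 < r₂ < r₀. Let Ē : ℝ → ℝ be continuous and nonpositive on [−r₀, −r₂]. Then e^{τ₂} ∫₀^{τ₂} e^{−s} (−Ē(x(s))) ds ≥ (1/M) ∫_{−r₀}^{−r₂} (−Ē(x)) dx. -/
/-- Change-of-variables estimate: if 0 < x' ≤ M on [0,τ₂], x(0) = -r₀,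
x(τ₂) = -r₂, and Ebar ≤ 0 on [-r₀,-r₂], then
e^{τ₂} ∫₀^{τ₂} e^{-s}(-Ebar(x(s))) ds ≥ (1/M) ∫_{-r₀}^{-r₂} (-Ebar(x)) dx. -/
theorem stmt_7 (r₀ r₂ τ₂ M : ℝ) (hr₂ : 0 < r₂) (hr : r₂ < r₀) (hτ : 0 ≤ τ₂)
    (hM : 0 < M)
    (x : ℝ → ℝ) (x' : ℝ → ℝ)
    (hx : ∀ s ∈ Set.Icc 0 τ₂, HasDerivAt x (x' s) s)
    (hx' : ∀ s ∈ Set.Icc 0 τ₂, 0 < x' s ∧ x' s ≤ M)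
    (hx0 : x 0 = -r₀) (hxτ : x τ₂ = -r₂)
    (Ebar : ℝ → ℝ) (hEb : Continuous Ebar)
    (hneg : ∀ y ∈ Set.Icc (-r₀) (-r₂), Ebar y ≤ 0) :
    Real.exp τ₂ * ∫ s in (0:ℝ)..τ₂, Real.exp (-s) * (-Ebar (x s)) ≥
      (1 / M) * ∫ y in (-r₀)..(-r₂), -Ebar y := by
  have hτ' : 0 < τ₂ := by
    rcases hτ.lt_or_eq with h | h
    · exact h
    · exfalso
      rw [← h, hx0] at hxτ
      linarith
  -- continuity of x on [0, τ₂]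
  have hxca : ∀ s ∈ Set.Icc (0:ℝ) τ₂, ContinuousAt x s := fun s hs => (hx s hs).continuousAt
  have hxcont : ContinuousOn x (Set.Icc 0 τ₂) := fun s hs => (hxca s hs).continuousWithinAt
  -- x is monotone
  have hmono : MonotoneOn x (Set.Icc 0 τ₂) := by
    refine (strictMonoOn_of_deriv_pos (convex_Icc 0 τ₂) hxcont ?_).monotoneOn
    intro t ht
    rw [interior_Icc] at ht
    rw [(hx t (Set.Ioo_subset_Icc_self ht)).deriv]
    exact (hx' t (Set.Ioo_subset_Icc_self ht)).1
  have hxmem : ∀ s ∈ Set.Icc (0:ℝ) τ₂, x s ∈ Set.Icc (-r₀) (-r₂) := by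
    intro s hs
    constructor
    · rw [← hx0]; exact hmono (Set.left_mem_Icc.2 hτ) hs hs.1
    · rw [← hxτ]; exact hmono hs (Set.right_mem_Icc.2 hτ) hs.2
  set h : ℝ → ℝ := fun s => Real.exp (-s) * (-Ebar (x s)) with hh
  have hhca : ∀ s ∈ Set.Icc (0:ℝ) τ₂, ContinuousAt h s := fun s hs =>
    ((Real.continuous_exp.comp continuous_neg).continuousAt).mul
      ((hEb.continuousAt.comp (hxca s hs)).neg)
  have hhcont : ContinuousOn h (Set.Icc 0 τ₂) := fun s hs => (hhca s hs).continuousWithinAt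
  set G : ℝ → ℝ := fun y => ∫ u in (-r₀)..y, -Ebar u with hG
  have hGd : ∀ y, HasDerivAt G (-Ebar y) y := fun y =>
    (hEb.neg.integral_hasStrictDerivAt (-r₀) y).hasDerivAt
  have hGc : Continuous G := by
    rw [continuous_iff_continuousAt]
    exact fun y => (hGd y).continuousAt
  set F : ℝ → ℝ := fun t => Real.exp τ₂ * (∫ s in (0:ℝ)..t, h s) - (1 / M) * G (x t) with hF
  -- continuity of F on [0, τ₂]
  have hFcont : ContinuousOn F (Set.Icc 0 τ₂) := by
    have h1 : ContinuousOn (fun t => ∫ s in (0:ℝ)..t, h s) (Set.Icc 0 τ₂) := by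
      have := intervalIntegral.continuousOn_primitive_interval
        (f := h) (a := (0:ℝ)) (b := τ₂) (μ := MeasureTheory.volume)
        (by rw [Set.uIcc_of_le hτ]; exact hhcont.integrableOn_Icc)
      rwa [Set.uIcc_of_le hτ] at this
    exact (continuousOn_const.mul h1).sub
      (continuousOn_const.mul (hGc.comp_continuousOn hxcont))
  -- derivative of F on the interior
  have hFd : ∀ t ∈ Set.Ioo (0:ℝ) τ₂,
      HasDerivAt F (Real.exp τ₂ * h t - (1 / M) * (-Ebar (x t) * x' t)) t := by
    intro t ht
    have htIcc : t ∈ Set.Icc (0:ℝ) τ₂ := Set.Ioo_subset_Icc_self ht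
    have hint : IntervalIntegrable h MeasureTheory.volume 0 t := by
      apply ContinuousOn.intervalIntegrable
      rw [Set.uIcc_of_le ht.1.le]
      exact hhcont.mono (Set.Icc_subset_Icc le_rfl ht.2.le)
    have hmeas : StronglyMeasurableAtFilter h (nhds t) :=
      ContinuousOn.stronglyMeasurableAtFilter isOpen_Ioo
        (fun s hs => (hhca s (Set.Ioo_subset_Icc_self hs)).continuousWithinAt) t ht
    have hd1 : HasDerivAt (fun u => ∫ s in (0:ℝ)..u, h s) (h t) t :=
      intervalIntegral.integral_hasDerivAt_right hint hmeas (hhca t htIcc)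
    have hd2 : HasDerivAt (fun u => G (x u)) (-Ebar (x t) * x' t) t :=
      (hGd (x t)).comp t (hx t htIcc)
    exact (hd1.const_mul _).sub (hd2.const_mul _)
  -- F is monotone on [0, τ₂]
  have hFmono : MonotoneOn F (Set.Icc 0 τ₂) := by
    apply monotoneOn_of_deriv_nonneg (convex_Icc 0 τ₂) hFcont
    · rw [interior_Icc]
      exact fun t ht => (hFd t ht).differentiableAt.differentiableWithinAt
    · rw [interior_Icc]
      intro t ht
      rw [(hFd t ht).deriv]
      have htIcc : t ∈ Set.Icc (0:ℝ) τ₂ := Set.Ioo_subset_Icc_self ht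
      have hE : 0 ≤ -Ebar (x t) := neg_nonneg.2 (hneg _ (hxmem t htIcc))
      have h1 : (1:ℝ) ≤ Real.exp τ₂ * Real.exp (-t) := by
        rw [← Real.exp_add]
        exact Real.one_le_exp (by linarith [ht.2])
      have h2 : x' t / M ≤ 1 := (div_le_one hM).2 (hx' t htIcc).2
      have h3 : 0 < x' t := (hx' t htIcc).1
      simp only [hh]
      have : Real.exp τ₂ * (Real.exp (-t) * -Ebar (x t)) - 1 / M * (-Ebar (x t) * x' t)
          = (-Ebar (x t)) * (Real.exp τ₂ * Real.exp (-t) - x' t / M) := by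
        field_simp; ring
      rw [this]
      exact mul_nonneg hE (by linarith)
  have key : F 0 ≤ F τ₂ := hFmono (Set.left_mem_Icc.2 hτ) (Set.right_mem_Icc.2 hτ) hτ
  have hF0 : F 0 = 0 := by
    simp only [hF, hx0, hG, intervalIntegral.integral_same, mul_zero, sub_zero]
  have hFτ : F τ₂ = Real.exp τ₂ * (∫ s in (0:ℝ)..τ₂, h s)
      - (1 / M) * ∫ y in (-r₀)..(-r₂), -Ebar y := by
    simp only [hF, hxτ, hG]
  rw [hF0, hFτ] at key
  simp only [hh] at key
  linarith
end

section
/- Under the hypotheses of Lemma 2 of the paper: if the electron enters the field at x = −r₀ with velocity v₀ ∈ (0,1) and zero initial acceleration, its velocity never exceeds v₀ before turning, and it reaches x = −r₂ at proper time τ₂, then its proper acceleration satisfies |A(τ₂)| ≥ K/(v₀γ(v₀)) where K = ∫_{−r₀}^{−r₂} |E(x)| dx. Formally: let x : [0,τ₂] → ℝ be C¹ with x(0) = −r₀, x(τ₂) = −r₂, and 0 < x'(s) ≤ v₀γ(v₀) for all s ∈ [0,τ₂]; let E : ℝ → ℝ be continuous with E ≤ 0 on [−r₀,−r₂]; then e^{τ₂}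 ∫₀^{τ₂} e^{−s}(−E(x(s))) ds ≥ (1/(v₀γ(v₀))) ∫_{−r₀}^{−r₂} (−E(x)) dx. -/
open Set MeasureTheory intervalIntegral

/-- Lemma 2 of the paper: with M = v₀γ(v₀), the proper acceleration magnitude
at proper time τ₂ satisfies |A(τ₂)| ≥ K/(v₀γ(v₀)). -/
theorem stmt_8 (r₀ r₂ τ₂ v₀ : ℝ) (hr₂ : 0 < r₂) (hr : r₂ < r₀) (hτ : 0 ≤ τ₂)
    (hv₀ : v₀ ∈ Set.Ioo (0:ℝ) 1)
    (x : ℝ → ℝ) (x' : ℝ → ℝ)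
    (hx : ∀ s ∈ Set.Icc 0 τ₂, HasDerivAt x (x' s) s)
    (hx' : ∀ s ∈ Set.Icc 0 τ₂, 0 < x' s ∧ x' s ≤ v₀ * (1 - v₀ ^ 2) ^ (-(1:ℝ)/2))
    (hx0 : x 0 = -r₀) (hxτ : x τ₂ = -r₂)
    (E : ℝ → ℝ) (hE : Continuous E)
    (hneg : ∀ y ∈ Set.Icc (-r₀) (-r₂), E y ≤ 0) :
    Real.exp τ₂ * ∫ s in (0:ℝ)..τ₂, Real.exp (-s) * (-E (x s)) ≥
      (1 / (v₀ * (1 - v₀ ^ 2) ^ (-(1:ℝ)/2))) * ∫ y in (-r₀)..(-r₂), -E y := by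
  set M : ℝ := v₀ * (1 - v₀ ^ 2) ^ (-(1:ℝ)/2) with hMdef
  have hv1 : 0 < 1 - v₀ ^ 2 := by nlinarith [hv₀.1, hv₀.2]
  have hM : 0 < M := mul_pos hv₀.1 (Real.rpow_pos_of_pos hv1 _)
  have huIcc : Set.uIcc (0:ℝ) τ₂ = Set.Icc 0 τ₂ := Set.uIcc_of_le hτ
  -- continuity of x on the interval
  have hcont : ContinuousOn x (Set.Icc 0 τ₂) :=
    fun s hs => (hx s hs).continuousAt.continuousWithinAt
  -- x is monotone on the interval
  have hmono : MonotoneOn x (Set.Icc 0 τ₂) := by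
    refine (strictMonoOn_of_deriv_pos (convex_Icc _ _) hcont ?_).monotoneOn
    intro s hs
    rw [interior_Icc] at hs
    have hs' : s ∈ Set.Icc 0 τ₂ := Set.Ioo_subset_Icc_self hs
    rw [(hx s hs').deriv]
    exact (hx' s hs').1
  have hxmem : ∀ s ∈ Set.Icc 0 τ₂, x s ∈ Set.Icc (-r₀) (-r₂) := by
    intro s hs
    constructor
    · rw [← hx0]; exact hmono (Set.left_mem_Icc.2 hτ) hs hs.1
    · rw [← hxτ]; exact hmono hs (Set.right_mem_Icc.2 hτ) hs.2
  have hEnn : ∀ s ∈ Set.Icc 0 τ₂, 0 ≤ -E (x s) := by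
    intro s hs
    simpa using hneg _ (hxmem s hs)
  -- bound for -E ∘ x on the interval
  obtain ⟨C, hC⟩ : ∃ C, ∀ y ∈ Set.Icc (-r₀) (-r₂), ‖(-E y)‖ ≤ C :=
    IsCompact.exists_bound_of_continuousOn isCompact_Icc hE.neg.continuousOn
  -- integrability of x'
  have hx'eq : Set.EqOn (deriv x) x' (Set.Icc 0 τ₂) := fun s hs => (hx s hs).deriv
  have hx'intIcc : IntegrableOn x' (Set.Icc 0 τ₂) := by
    refine IntegrableOn.congr_fun ?_ hx'eq measurableSet_Icc
    refine Measure.integrableOn_of_bounded (by simp) (measurable_deriv x).aestronglyMeasurable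
      (M := M) ?_
    rw [ae_restrict_iff' measurableSet_Icc]
    filter_upwards with s hs
    rw [hx'eq hs, Real.norm_eq_abs, abs_of_pos (hx' s hs).1]
    exact (hx' s hs).2
  -- integrability of the key integrand
  have hprod : IntegrableOn (fun s => x' s • ((fun y => -E y) ∘ x) s) (Set.Icc 0 τ₂) := by
    refine ⟨(hx'intIcc.1.smul ((hE.neg.comp_continuousOn hcont).aestronglyMeasurable
      measurableSet_Icc)), ?_⟩
    refine HasFiniteIntegral.restrict_of_bounded (C := M * C) (by simp) ?_
    rw [ae_restrict_iff' measurableSet_Icc]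
    filter_upwards with s hs
    simp only [smul_eq_mul, Function.comp_apply, Real.norm_eq_abs, abs_mul]
    have h1 : |x' s| ≤ M := by
      rw [abs_of_pos (hx' s hs).1]; exact (hx' s hs).2
    have h2 : |(-E (x s))| ≤ C := hC _ (hxmem s hs)
    have : (0:ℝ) ≤ C := le_trans (abs_nonneg _) h2
    exact mul_le_mul h1 h2 (abs_nonneg _) hM.le
  -- change of variables
  have hchg : (∫ s in (0:ℝ)..τ₂, x' s • ((fun y => -E y) ∘ x) s) = ∫ y in (-r₀)..(-r₂), -E y := by
    rw [← hx0, ← hxτ]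
    have hinf : (0:ℝ) ⊓ τ₂ = 0 := inf_eq_left.2 hτ
    have hsup : (0:ℝ) ⊔ τ₂ = τ₂ := sup_eq_right.2 hτ
    refine integral_comp_smul_deriv''' (f := x) (f' := x') (g := fun y => -E y)
      (by rwa [huIcc]) ?_ hE.neg.continuousOn ?_ ?_
    · intro s hs
      rw [min_eq_left hτ, max_eq_right hτ] at hs
      exact ((hx s (Set.Ioo_subset_Icc_self hs)).hasDerivWithinAt)
    · exact hE.neg.continuousOn.integrableOn_compact
        (isCompact_Icc.image_of_continuousOn (by rw [hinf, hsup]; exact hcont))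
    · rwa [huIcc]
  -- pointwise comparison and integral monotonicity
  have hintR : IntervalIntegrable (fun s => M * (Real.exp τ₂ * (Real.exp (-s) * (-E (x s)))))
      volume 0 τ₂ := by
    apply ContinuousOn.intervalIntegrable
    rw [huIcc]
    exact (continuousOn_const.mul (continuousOn_const.mul
      ((Real.continuous_exp.comp continuous_neg).continuousOn.mul
        (hE.neg.comp_continuousOn hcont))))
  have hintL : IntervalIntegrable (fun s => x' s • ((fun y => -E y) ∘ x) s) volume 0 τ₂ := by
    rw [intervalIntegrable_iff_integrableOn_Ioc_of_le hτ]
    exact hprod.mono_set Set.Ioc_subset_Icc_self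
  have hmono2 : (∫ s in (0:ℝ)..τ₂, x' s • ((fun y => -E y) ∘ x) s) ≤
      ∫ s in (0:ℝ)..τ₂, M * (Real.exp τ₂ * (Real.exp (-s) * (-E (x s)))) := by
    refine integral_mono_on hτ hintL hintR ?_
    intro s hs
    have h1 : (1:ℝ) ≤ Real.exp τ₂ * Real.exp (-s) := by
      rw [← Real.exp_add]
      have : 0 ≤ τ₂ + -s := by linarith [hs.2]
      simpa using Real.one_le_exp this
    have h2 : 0 ≤ -E (x s) := hEnn s hs
    have h3 : x' s ≤ M := (hx' s hs).2
    simp only [smul_eq_mul, Function.comp_apply]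
    calc x' s * (-E (x s)) ≤ M * (-E (x s)) := mul_le_mul_of_nonneg_right h3 h2
      _ ≤ M * ((Real.exp τ₂ * Real.exp (-s)) * (-E (x s))) := by
          apply mul_le_mul_of_nonneg_left _ hM.le
          nlinarith
      _ = M * (Real.exp τ₂ * (Real.exp (-s) * (-E (x s)))) := by ring
  have hpull : (∫ s in (0:ℝ)..τ₂, M * (Real.exp τ₂ * (Real.exp (-s) * (-E (x s))))) =
      M * (Real.exp τ₂ * ∫ s in (0:ℝ)..τ₂, Real.exp (-s) * (-E (x s))) := by
    have heq : (fun s => M * (Real.exp τ₂ * (Real.exp (-s) * (-E (x s))))) =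
        fun s => (M * Real.exp τ₂) * (Real.exp (-s) * (-E (x s))) := by funext s; ring
    rw [heq, intervalIntegral.integral_const_mul, mul_assoc]
  have key : (∫ y in (-r₀)..(-r₂), -E y) ≤
      M * (Real.exp τ₂ * ∫ s in (0:ℝ)..τ₂, Real.exp (-s) * (-E (x s))) := by
    rw [← hchg]; exact hmono2.trans hpull.le
  rw [ge_iff_le]
  calc (1 / M) * ∫ y in (-r₀)..(-r₂), -E y
      ≤ (1 / M) * (M * (Real.exp τ₂ * ∫ s in (0:ℝ)..τ₂, Real.exp (-s) * (-E (x s)))) :=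
        mul_le_mul_of_nonneg_left key (by positivity)
    _ = Real.exp τ₂ * ∫ s in (0:ℝ)..τ₂, Real.exp (-s) * (-E (x s)) := by
        rw [one_div, inv_mul_cancel_left₀ hM.ne']
end

section
/- Let 0 < r₁ < r₀, and let x : [0, t₁] → ℝ be differentiable with x(0) = −r₀, x(t₁) = −r₁, 0 < x'(t) ≤ v₀ for all t, and x(t) < 0 throughout. Suppose v : [0,t₁] → ℝ is differentiable with v(0) = v₀ ∈ (0,1), v(t₁) ≥ 0, and −v'(t) ≥ C·(−1/x(t) − 1/r₀) for all t, where C = (1 − v₀²)²/v₀. Then v₀ ≥ (C/v₀)·(log(r₀/r₁) − (r₀ − r₁)/r₀), i.e., v₀²/(1 − v₀²)² ≥ log(r₀/r₁) − 1 + r₁/r₀. -/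
/-- Integration step of Theorem 2: integrating the coordinate-acceleration
lower bound |A_c| ≥ C(-1/x - 1/r₀), C = (1-v₀²)²/v₀, along the trajectory gives
v₀²/(1-v₀²)² ≥ log(r₀/r₁) - 1 + r₁/r₀. -/
theorem stmt_15 (r₀ r₁ t₁ v₀ : ℝ) (hr₁ : 0 < r₁) (hr : r₁ < r₀)
    (ht₁ : 0 ≤ t₁) (hv₀ : v₀ ∈ Set.Ioo (0:ℝ) 1)
    (x : ℝ → ℝ) (x' : ℝ → ℝ)
    (hx : ∀ t ∈ Set.Icc 0 t₁, HasDerivAt x (x' t) t)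
    (hx' : ∀ t ∈ Set.Icc 0 t₁, 0 < x' t ∧ x' t ≤ v₀)
    (hxneg : ∀ t ∈ Set.Icc 0 t₁, x t < 0)
    (hx0 : x 0 = -r₀) (hx1 : x t₁ = -r₁)
    (v : ℝ → ℝ) (v' : ℝ → ℝ)
    (hv : ∀ t ∈ Set.Icc 0 t₁, HasDerivAt v (v' t) t)
    (hv0 : v 0 = v₀) (hv1 : 0 ≤ v t₁)
    (hacc : ∀ t ∈ Set.Icc 0 t₁,
      -v' t ≥ ((1 - v₀ ^ 2) ^ 2 / v₀) * (-1 / x t - 1 / r₀)) :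
    v₀ ^ 2 / (1 - v₀ ^ 2) ^ 2 ≥ Real.log (r₀ / r₁) - 1 + r₁ / r₀ := by
  obtain ⟨hv₀0, hv₀1⟩ := hv₀
  have hr₀ : (0:ℝ) < r₀ := hr₁.trans hr
  obtain ⟨C, hC⟩ : ∃ c : ℝ, c = (1 - v₀ ^ 2) ^ 2 / v₀ := ⟨_, rfl⟩
  simp only [← hC] at hacc
  obtain ⟨K, hK⟩ : ∃ k : ℝ, k = C / v₀ := ⟨_, rfl⟩
  have hsq1 : v₀ ^ 2 < 1 := by nlinarith
  have hsqpos : (0:ℝ) < (1 - v₀ ^ 2) ^ 2 := pow_pos (by nlinarith) 2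
  have hCpos : 0 < C := by rw [hC]; exact div_pos hsqpos hv₀0
  have hKpos : 0 < K := by rw [hK]; exact div_pos hCpos hv₀0
  -- x is monotone on [0, t₁]
  have hmono : MonotoneOn x (Set.Icc 0 t₁) := by
    apply monotoneOn_of_hasDerivWithinAt_nonneg (convex_Icc 0 t₁)
      (fun t ht => (hx t ht).continuousAt.continuousWithinAt)
      (f' := x') (fun t ht => ((hx t (interior_subset ht)).hasDerivWithinAt).mono
        interior_subset)
    intro t ht
    exact (hx' t (interior_subset ht)).1.le
  have hxlb : ∀ t ∈ Set.Icc 0 t₁, -r₀ ≤ x t := by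
    intro t ht
    rw [← hx0]
    exact hmono (Set.left_mem_Icc.2 ht₁) ht ht.1
  -- auxiliary function g
  set g : ℝ → ℝ := fun t => v t - K * (Real.log (-(x t)) + x t / r₀) with hg
  set g' : ℝ → ℝ := fun t => v' t - K * (x' t / x t + x' t / r₀) with hg'
  have hgderiv : ∀ t ∈ Set.Icc 0 t₁, HasDerivAt g (g' t) t := by
    intro t ht
    have hxt : x t < 0 := hxneg t ht
    have hxne : -(x t) ≠ 0 := ne_of_gt (by linarith)
    have hlog : HasDerivAt (fun t => Real.log (-(x t))) (x' t / x t) t := by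
      have := ((hx t ht).neg).log hxne
      simpa [neg_div_neg_eq] using this
    exact (hv t ht).sub (((hlog.add ((hx t ht).div_const r₀))).const_mul K)
  -- g' ≤ 0 on [0, t₁]
  have hgle : ∀ t ∈ Set.Icc 0 t₁, g' t ≤ 0 := by
    intro t ht
    have hxt : x t < 0 := hxneg t ht
    have hB : 0 ≤ -1 / x t - 1 / r₀ := by
      have h1 : 1 / r₀ ≤ 1 / (-(x t)) :=
        one_div_le_one_div_of_le (by linarith) (by linarith [hxlb t ht])
      have h2 : -1 / x t = 1 / (-(x t)) := by rw [div_neg, neg_div]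
      linarith [h2 ▸ h1]
    obtain ⟨hxp, hxv⟩ := hx' t ht
    have hacc' : -v' t ≥ C * (-1 / x t - 1 / r₀) := hacc t ht
    have hterm : x' t / x t + x' t / r₀ = -(x' t * (-1 / x t - 1 / r₀)) := by
      field_simp [hxt.ne]
      ring
    have hKC : K * x' t ≤ C := by
      rw [hK]
      rw [div_mul_eq_mul_div, div_le_iff₀ hv₀0]
      nlinarith
    have hKxB : K * (x' t * (-1 / x t - 1 / r₀)) ≤ C * (-1 / x t - 1 / r₀) := by
      rw [← mul_assoc]
      exact mul_le_mul_of_nonneg_right hKC hB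
    show v' t - K * (x' t / x t + x' t / r₀) ≤ 0
    rw [hterm]
    linarith
  -- g antitone
  have hanti : AntitoneOn g (Set.Icc 0 t₁) := by
    apply antitoneOn_of_hasDerivWithinAt_nonpos (convex_Icc 0 t₁)
      (fun t ht => (hgderiv t ht).continuousAt.continuousWithinAt)
      (f' := g') (fun t ht => ((hgderiv t (interior_subset ht)).hasDerivWithinAt).mono
        interior_subset)
    intro t ht
    exact hgle t (interior_subset ht)
  have hkey : g t₁ ≤ g 0 :=
    hanti (Set.left_mem_Icc.2 ht₁) (Set.right_mem_Icc.2 ht₁) ht₁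
  have hg0 : g 0 = v₀ - K * (Real.log r₀ - 1) := by
    simp only [hg, hv0, hx0, neg_neg]
    rw [neg_div, div_self hr₀.ne']
    ring
  have hg1 : g t₁ = v t₁ - K * (Real.log r₁ - r₁ / r₀) := by
    simp only [hg, hx1, neg_neg]
    rw [neg_div]
    ring
  rw [hg0, hg1] at hkey
  have hlogdiv : Real.log (r₀ / r₁) = Real.log r₀ - Real.log r₁ :=
    Real.log_div (ne_of_gt hr₀) (ne_of_gt hr₁)
  have hmain : K * (Real.log (r₀ / r₁) - 1 + r₁ / r₀) ≤ v₀ := by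
    rw [hlogdiv]; nlinarith [hv1]
  have hKval : K = (1 - v₀ ^ 2) ^ 2 / v₀ ^ 2 := by
    rw [hK, hC, div_div, ← pow_two]
  have hL : Real.log (r₀ / r₁) - 1 + r₁ / r₀ ≤ v₀ / K := by
    rw [le_div_iff₀ hKpos]
    nlinarith [hmain]
  have hvK : v₀ / K = v₀ ^ 3 / (1 - v₀ ^ 2) ^ 2 := by
    rw [hKval]
    field_simp
  have h3 : v₀ ^ 3 / (1 - v₀ ^ 2) ^ 2 ≤ v₀ ^ 2 / (1 - v₀ ^ 2) ^ 2 := by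
    exact (div_le_div_iff_of_pos_right hsqpos).mpr (by nlinarith)
  rw [hvK] at hL
  linarith
end
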